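/- arXiv:2110.13054 — 6 statements merged into one kernel-verified Lean document; each statement's English description precedes it below -/
import Mathlib

section
/- Let (X_i)_{i≥1} be i.i.d. integrable real-valued random variables with mean ω, and let (B_i)_{i≥1} be independent Bernoulli random variables, independent of (X_i), with P(B_i = 1) = ε_i ∈ [0,1] and ∑_{i=1}^∞ ε_i = ∞. Then almost surely ∑_{i=1}^n B_i → ∞ as n → ∞, and the empirical mean of the retained samples converges to the true mean: (∑_{i=1}^n B_i X_i) / (∑_{i=1}^n B_i) → ω almost surely as n → ∞. -/
/-!
Since the selections `B` are independent of the samples `X`, one may freeze a selection path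
`b`. By the second Borel–Cantelli lemma almost every path keeps infinitely many indices, and the
samples at the kept indices `nth (b · = 1) k` are again i.i.d., so the strong law applies to them.
The retained mean after `n` steps is their Cesàro mean at time `count (b · = 1) n → ∞`.
-/

open MeasureTheory ProbabilityTheory Filter Finset
open scoped ProbabilityTheory

namespace Nat

variable {p : ℕ → Prop} [DecidablePred p]

theorem tendsto_count_atTop (hp : (Set.ofPred p).Infinite) : Tendsto (count p) atTop atTop :=
  tendsto_atTop_atTop_of_monotone (count_monotone p) fun m =>
    ⟨nth p m + 1, ((lt_nth_iff_count_lt hp).2 (lt_add_one _)).le⟩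

theorem sum_range_count_nth {M : Type*} [AddCommMonoid M] (hp : (Set.ofPred p).Infinite)
    (x : ℕ → M) (n : ℕ) :
    ∑ k ∈ range (count p n), x (nth p k) = ∑ i ∈ range n with p i, x i := by
  refine sum_nbij (nth p) (fun k hk => ?_) (nth_injective hp).injOn (fun i hi => ?_)
    fun _ _ => rfl
  · simp only [mem_range, mem_filter] at hk ⊢
    exact ⟨(lt_nth_iff_count_lt hp).1 hk, nth_mem_of_infinite hp k⟩
  · rw [mem_coe, mem_filter, mem_range] at hi
    refine ⟨count p i, ?_, nth_count hi.2⟩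
    rw [mem_coe, mem_range, lt_nth_iff_count_lt hp, nth_count hi.2]
    exact hi.1

theorem tendsto_sum_filter_div_count (hp : (Set.ofPred p).Infinite) {x : ℕ → ℝ} {ω : ℝ}
    (hx : Tendsto (fun K : ℕ => (∑ k ∈ range K, x (nth p k)) / K) atTop (nhds ω)) :
    Tendsto (fun n => (∑ i ∈ range n with p i, x i) / count p n) atTop (nhds ω) := by
  simpa only [Function.comp_def, sum_range_count_nth hp] using hx.comp (tendsto_count_atTop hp)

end Nat

theorem ENNReal.tsum_ofReal_eq_top_of_tendsto {ε : ℕ → ℝ} (hε : ∀ i, 0 ≤ ε i)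
    (hdiv : Tendsto (fun n => ∑ i ∈ range n, ε i) atTop atTop) :
    ∑' i, ENNReal.ofReal (ε i) = ⊤ := by
  by_contra h
  have := ENNReal.summable_toReal h
  simp only [ENNReal.toReal_ofReal (hε _)] at this
  exact (not_summable_iff_tendsto_nat_atTop_of_nonneg hε).2 hdiv this

namespace ProbabilityTheory

variable {Ω : Type*} {mΩ : MeasurableSpace Ω} {μ : Measure Ω}

theorem iIndepFun.iIndepSet_preimage {ι β : Type*} {mβ : MeasurableSpace β} {f : ι → Ω → β}
    (hf : iIndepFun f μ) (hfm : ∀ i, Measurable (f i)) {t : ι → Set β}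
    (ht : ∀ i, MeasurableSet (t i)) : iIndepSet (fun i => f i ⁻¹' t i) μ := by
  rw [iIndepSet_iff_iIndepSets_singleton fun i => hfm i (ht i), iIndepSets_singleton_iff]
  exact fun s => hf.measure_inter_preimage_eq_mul s fun i _ => ht i

theorem ae_frequently_mem_of_iIndepSet {s : ℕ → Set Ω} (hsm : ∀ i, MeasurableSet (s i))
    (hs : iIndepSet s μ) (hsum : ∑' i, μ (s i) = ⊤) : ∀ᵐ a ∂μ, ∃ᶠ i in atTop, a ∈ s i := by
  have := hs.isProbabilityMeasure
  have hlimsup : ∀ᵐ a ∂μ, a ∈ limsup s atTop :=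
    (ae_mem_iff_measure_eq (MeasurableSet.measurableSet_limsup hsm).nullMeasurableSet).2
      (by rw [measure_limsup_eq_one hsm hs hsum, measure_univ])
  filter_upwards [hlimsup] with a ha using mem_limsup_iff_frequently_mem.1 ha

theorem IndepFun.ae_mem_of_ae_ae_mem {α β : Type*} {mα : MeasurableSpace α}
    {mβ : MeasurableSpace β} [IsFiniteMeasure μ] {Y : Ω → α} {Z : Ω → β}
    (hYZ : IndepFun Y Z μ) (hY : Measurable Y) (hZ : Measurable Z) {S : Set (α × β)}
    (hS : MeasurableSet S) (h : ∀ᵐ a ∂μ, ∀ᵐ a' ∂μ, (Y a, Z a') ∈ S) :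
    ∀ᵐ a ∂μ, (Y a, Z a) ∈ S := by
  -- the joint law is the product of the marginals, so Fubini reduces to sections
  have hsection : MeasurableSet {y | ∀ᵐ z ∂μ.map Z, (y, z) ∈ S} :=
    measurable_measure_prodMk_left hS.compl (measurableSet_singleton 0)
  rw [← ae_map_iff (p := (· ∈ S)) (hY.prodMk hZ).aemeasurable hS,
    (indepFun_iff_map_prod_eq_prod_map_map hY.aemeasurable hZ.aemeasurable).1 hYZ,
    Measure.ae_prod_iff_ae_ae (p := (· ∈ S)) hS, ae_map_iff hY.aemeasurable hsection]
  filter_upwards [h] with a ha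
  exact (ae_map_iff hZ.aemeasurable (measurable_prodMk_left hS)).2 ha

theorem strong_law_ae_real_comp_injective {X : ℕ → Ω → ℝ} (hint : Integrable (X 0) μ)
    (hindep : Pairwise fun i j => IndepFun (X i) (X j) μ)
    (hident : ∀ i, IdentDistrib (X i) (X 0) μ μ)
    {f : ℕ → ℕ} (hf : Function.Injective f) :
    ∀ᵐ a ∂μ, Tendsto (fun n : ℕ => (∑ k ∈ range n, X (f k) a) / n) atTop (nhds μ[X 0]) := by
  have := strong_law_ae_real (X ∘ f) ((hident (f 0)).integrable_iff.2 hint)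
    (fun i j hij => hindep (hf.ne hij)) fun i => (hident (f i)).trans (hident (f 0)).symm
  rwa [Function.comp_apply, (hident (f 0)).integral_eq] at this

end ProbabilityTheory

def retainedMeanTendsto (ω : ℝ) : Set ((ℕ → ℝ) × (ℕ → ℝ)) :=
  {q | Tendsto (fun n => ∑ i ∈ range n, q.1 i) atTop atTop ∧
    Tendsto (fun n => (∑ i ∈ range n, q.1 i * q.2 i) / ∑ i ∈ range n, q.1 i) atTop (nhds ω)}

theorem measurableSet_retainedMeanTendsto (ω : ℝ) : MeasurableSet (retainedMeanTendsto ω) := by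
  have hcount : ∀ n, Measurable fun q : (ℕ → ℝ) × (ℕ → ℝ) => ∑ i ∈ range n, q.1 i := by
    fun_prop
  have hsum : ∀ n, Measurable fun q : (ℕ → ℝ) × (ℕ → ℝ) => ∑ i ∈ range n, q.1 i * q.2 i := by
    fun_prop
  exact (measurableSet_tendsto atTop hcount).inter
    (measurableSet_tendsto _ fun n => (hsum n).div (hcount n))

theorem sum_range_mul_eq_sum_filter {b x : ℕ → ℝ} (hb : ∀ i, b i = 0 ∨ b i = 1) (n : ℕ) :
    ∑ i ∈ range n, b i * x i = ∑ i ∈ range n with b i = 1, x i := by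
  rw [sum_filter]
  refine sum_congr rfl fun i _ => ?_
  rcases hb i with h | h <;> simp [h]

theorem mem_retainedMeanTendsto {b x : ℕ → ℝ} {ω : ℝ} (hb : ∀ i, b i = 0 ∨ b i = 1)
    (hinf : (Set.ofPred (b · = 1)).Infinite)
    (hx : Tendsto (fun K : ℕ => (∑ k ∈ range K, x (Nat.nth (b · = 1) k)) / K) atTop (nhds ω)) :
    (b, x) ∈ retainedMeanTendsto ω := by
  have hcount : ∀ n, ∑ i ∈ range n, b i = Nat.count (b · = 1) n := fun n => by
    simpa [Nat.count_eq_card_filter_range] using sum_range_mul_eq_sum_filter (x := 1) hb n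
  refine ⟨?_, ?_⟩
  · simpa only [hcount, Function.comp_def] using
      tendsto_natCast_atTop_atTop.comp (Nat.tendsto_count_atTop hinf)
  · simpa only [hcount, sum_range_mul_eq_sum_filter hb] using
      Nat.tendsto_sum_filter_div_count hinf hx

/-- **Theorem 2 of the paper: pure exploration debiases.**
Let `(X i)` be i.i.d. integrable real random variables with mean `ω`, and let `(B i)` be
independent Bernoulli (`{0,1}`-valued) random variables, independent of `(X i)`, with
`P(B i = 1) = ε i ∈ [0,1]` and `∑ ε i = ∞`. Then almost surely the number of retained
samples `∑_{i<n} B i` tends to infinity and the empirical mean of the retained samples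
`(∑_{i<n} B i · X i) / (∑_{i<n} B i)` converges to `ω`. -/
theorem pure_exploration_debiases
    {Ω : Type*} [MeasureSpace Ω] [IsProbabilityMeasure (ℙ : Measure Ω)]
    (X B : ℕ → Ω → ℝ) (ε : ℕ → ℝ) (ω : ℝ)
    (hXm : ∀ i, Measurable (X i)) (hBm : ∀ i, Measurable (B i))
    (hXindep : iIndepFun X)
    (hXident : ∀ i, Measure.map (X i) ℙ = Measure.map (X 0) ℙ)
    (hXint : Integrable (X 0)) (hω : ω = ∫ a, X 0 a)
    (hB01 : ∀ i, ∀ᵐ a, B i a = 0 ∨ B i a = 1)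
    (hBindep : iIndepFun B)
    (hε : ∀ i, ε i ∈ Set.Icc (0 : ℝ) 1)
    (hBε : ∀ i, ℙ {a | B i a = 1} = ENNReal.ofReal (ε i))
    (hXB : IndepFun (fun a => fun i => X i a) (fun a => fun i => B i a) ℙ)
    (hdiv : Tendsto (fun n => ∑ i ∈ Finset.range n, ε i) atTop atTop) :
    ∀ᵐ a, Tendsto (fun n => ∑ i ∈ Finset.range n, B i a) atTop atTop ∧
      Tendsto
        (fun n => (∑ i ∈ Finset.range n, B i a * X i a) / (∑ i ∈ Finset.range n, B i a))
        atTop (nhds ω) := by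
  have hident : ∀ i, IdentDistrib (X i) (X 0) :=
    fun i => ⟨(hXm i).aemeasurable, (hXm 0).aemeasurable, hXident i⟩
  have hfreq : ∀ᵐ a, ∃ᶠ i in atTop, B i a = 1 := by
    refine ae_frequently_mem_of_iIndepSet (fun i => hBm i (measurableSet_singleton 1))
      (hBindep.iIndepSet_preimage hBm fun _ => measurableSet_singleton 1) ?_
    rw [← ENNReal.tsum_ofReal_eq_top_of_tendsto (fun i => (hε i).1) hdiv]
    exact tsum_congr hBε
  have hsection : ∀ᵐ a, ∀ᵐ a', ((fun i => B i a), fun i => X i a') ∈ retainedMeanTendsto ω := by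
    filter_upwards [ae_all_iff.2 hB01, hfreq] with a h01 hkept
    have hinf := Nat.frequently_atTop_iff_infinite.1 hkept
    filter_upwards [strong_law_ae_real_comp_injective hXint (fun i j hij => hXindep.indepFun hij)
      hident (Nat.nth_injective hinf)] with a' ha'
    exact mem_retainedMeanTendsto h01 hinf (hω ▸ ha')
  exact hXB.symm.ae_mem_of_ae_ae_mem (measurable_pi_iff.2 hBm) (measurable_pi_iff.2 hXm)
    (measurableSet_retainedMeanTendsto ω) hsection
end

section
/- Let φ : ℝ → (0,∞) be an everywhere-positive integrable probability density that is symmetric about ω and unimodal about ω. Let c < θ be real numbers and consider the exploration interval [2c − θ, θ], whose midpoint is c (as prescribed by the lower-bound rule of Definition 1 for a symmetric estimated density with reference point c). Let m be the unique median of the truncation of φ to [2c − θ, θ]. Then m lies weakly between the current estimate and the true parameter: if c ≤ ω then c ≤ m ≤ ω, and if c ≥ ω then ω ≤ m ≤ c. In particular, if c = ω then m = ω. -/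
open MeasureTheory intervalIntegral Set

/-!
Reflection `x ↦ 2c - x` swaps the two halves `[2c - θ, c]` and `[c, θ]` of the exploration
interval. When `c ≤ ω`, unimodality makes the reflected density smaller on `[c, θ]`, so the
right half carries at least half of the mass and the median lies to the right of `c`. Symmetry
about `ω` balances `[2ω - θ, ω]` against `[ω, θ]`, and `[2c - θ, ω]` contains `[2ω - θ, ω]`, so the
left of `ω` carries at least half of the mass and the median lies to the left of `ω`. The case
`ω ≤ c` is the mirror image. Strict positivity of `φ` turns these mass comparisons into order
relations.
-/

theorem MeasureTheory.LocallyIntegrable.intervalIntegrable {E : Type*} [NormedAddCommGroup E]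
    {f : ℝ → E} {μ : Measure ℝ} (hf : LocallyIntegrable f μ) (a b : ℝ) :
    IntervalIntegrable f μ a b :=
  intervalIntegrable_iff.mpr <| (hf.integrableOn_isCompact isCompact_uIcc).mono_set uIoc_subset_uIcc

def IsUnimodalAbout (φ : ℝ → ℝ) (ω : ℝ) : Prop :=
  ∀ x y : ℝ, |y - ω| ≤ |x - ω| → φ x ≤ φ y

namespace IsUnimodalAbout

variable {φ : ℝ → ℝ} {ω c x : ℝ}

theorem reflect_le (h : IsUnimodalAbout φ ω) (hcω : c ≤ ω) (hcx : c ≤ x) :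
    φ (2 * c - x) ≤ φ x :=
  h _ _ <| by
    rw [abs_of_nonpos (by linarith : 2 * c - x - ω ≤ 0), abs_le]
    constructor <;> linarith

theorem le_reflect (h : IsUnimodalAbout φ ω) (hωc : ω ≤ c) (hcx : c ≤ x) :
    φ x ≤ φ (2 * c - x) :=
  h _ _ <| by
    rw [abs_of_nonneg (by linarith : 0 ≤ x - ω), abs_le]
    constructor <;> linarith

end IsUnimodalAbout

section Reflection

variable {f : ℝ → ℝ} {c θ : ℝ}

theorem integral_reflect_left_half (c θ : ℝ) :
    ∫ x in (2 * c - θ)..c, f x = ∫ x in c..θ, f (2 * c - x) := by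
  rw [integral_comp_sub_left, two_mul, add_sub_cancel_right]

theorem integral_left_half_eq_right_half (h : ∀ x, f (2 * c - x) = f x) (θ : ℝ) :
    ∫ x in (2 * c - θ)..c, f x = ∫ x in c..θ, f x := by
  simp only [integral_reflect_left_half, h]

theorem integral_left_half_le_right_half (hf : LocallyIntegrable f) (hcθ : c ≤ θ)
    (h : ∀ x ∈ Icc c θ, f (2 * c - x) ≤ f x) :
    ∫ x in (2 * c - θ)..c, f x ≤ ∫ x in c..θ, f x := by
  rw [integral_reflect_left_half]
  refine integral_mono_on hcθ ?_ (hf.intervalIntegrable c θ) h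
  simpa [two_mul] using (hf.intervalIntegrable (2 * c - θ) c).comp_sub_left (2 * c) |>.symm

theorem integral_right_half_le_left_half (hf : LocallyIntegrable f) (hcθ : c ≤ θ)
    (h : ∀ x ∈ Icc c θ, f x ≤ f (2 * c - x)) :
    ∫ x in c..θ, f x ≤ ∫ x in (2 * c - θ)..c, f x := by
  simpa [intervalIntegral.integral_neg] using
    integral_left_half_le_right_half hf.neg hcθ fun x hx => neg_le_neg (h x hx)

end Reflection

theorem integral_le_integral_of_le_left {f : ℝ → ℝ} (hnonneg : ∀ x, 0 ≤ f x)
    (hf : LocallyIntegrable f) (t : ℝ) {a b : ℝ} (hab : a ≤ b) :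
    ∫ x in b..t, f x ≤ ∫ x in a..t, f x := by
  rw [← integral_add_adjacent_intervals (hf.intervalIntegrable a b) (hf.intervalIntegrable b t)]
  linarith [integral_nonneg (μ := volume) hab fun x _ => hnonneg x]

section PositiveDensity

variable {f : ℝ → ℝ} (hpos : ∀ x, 0 < f x) (hf : LocallyIntegrable f)
include hpos hf

theorem le_of_integral_nonneg {s t : ℝ} (h : 0 ≤ ∫ x in s..t, f x) : s ≤ t := by
  by_contra! hts
  rw [integral_symm] at h
  linarith [intervalIntegral_pos_of_pos (hf.intervalIntegrable t s) hpos hts]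

variable {a b m : ℝ} (hmed : ∫ x in a..m, f x = ∫ x in m..b, f x)
include hmed

theorem le_median_of_integral_le {p : ℝ} (h : ∫ x in a..p, f x ≤ ∫ x in p..b, f x) : p ≤ m := by
  refine le_of_integral_nonneg hpos hf ?_
  have := integral_add_adjacent_intervals (hf.intervalIntegrable a p) (hf.intervalIntegrable p m)
  have := integral_add_adjacent_intervals (hf.intervalIntegrable p m) (hf.intervalIntegrable m b)
  linarith

theorem median_le_of_integral_le {p : ℝ} (h : ∫ x in p..b, f x ≤ ∫ x in a..p, f x) : m ≤ p := by
  refine le_of_integral_nonneg hpos hf ?_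
  have := integral_add_adjacent_intervals (hf.intervalIntegrable a m) (hf.intervalIntegrable m p)
  have := integral_add_adjacent_intervals (hf.intervalIntegrable m p) (hf.intervalIntegrable p b)
  linarith

end PositiveDensity

theorem truncated_median_between_estimate_and_truth_general
    (φ : ℝ → ℝ) (ω : ℝ)
    (hpos : ∀ x, 0 < φ x) (hint : Integrable φ)
    (hsym : ∀ t : ℝ, φ (ω + t) = φ (ω - t))
    (huni : ∀ x y : ℝ, |y - ω| ≤ |x - ω| → φ x ≤ φ y)
    (c θ : ℝ) (hcθ : c < θ)
    (m : ℝ)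
    (hmed : (∫ x in (2 * c - θ)..m, φ x) = ∫ x in m..θ, φ x) :
    (c ≤ ω → c ≤ m ∧ m ≤ ω) ∧ (ω ≤ c → ω ≤ m ∧ m ≤ c) ∧ (c = ω → m = ω) := by
  have hφ := hint.locallyIntegrable
  have hreflect (x : ℝ) : φ (2 * ω - x) = φ x := by
    convert (hsym (x - ω)).symm using 2 <;> ring
  have hhalves := integral_left_half_eq_right_half hreflect θ
  have below (hcω : c ≤ ω) : c ≤ m ∧ m ≤ ω := by
    refine ⟨le_median_of_integral_le hpos hφ hmed ?_, median_le_of_integral_le hpos hφ hmed ?_⟩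
    · exact integral_left_half_le_right_half hφ hcθ.le fun x hx =>
        IsUnimodalAbout.reflect_le huni hcω hx.1
    · exact hhalves ▸ integral_le_integral_of_le_left (fun x => (hpos x).le) hφ ω (by linarith)
  have above (hωc : ω ≤ c) : ω ≤ m ∧ m ≤ c := by
    refine ⟨le_median_of_integral_le hpos hφ hmed ?_, median_le_of_integral_le hpos hφ hmed ?_⟩
    · exact hhalves ▸ integral_le_integral_of_le_left (fun x => (hpos x).le) hφ ω (by linarith)
    · exact integral_right_half_le_left_half hφ hcθ.le fun x hx =>
        IsUnimodalAbout.le_reflect huni hωc hx.1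
  exact ⟨below, above, fun h => le_antisymm (below h.le).2 (above h.ge).1⟩

/-- **population version of Theorem 3(a) of the paper.**
Let `φ` be an everywhere-positive integrable probability density, symmetric about `ω`
and unimodal about `ω`.  For `c < θ`, consider the exploration interval `[2c − θ, θ]`
(whose midpoint is `c`, as prescribed by the lower-bound rule of Definition 1), and let
`m` be the (unique) median of the truncation of `φ` to `[2c − θ, θ]`, i.e. `m` lies in
the interval and `∫_{2c−θ}^m φ = ∫_m^θ φ`.  Then `m` lies weakly between the current
estimate `c` and the true parameter `ω`; in particular `c = ω` forces `m = ω`. -/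
theorem truncated_median_between_estimate_and_truth
    (φ : ℝ → ℝ) (ω : ℝ)
    (hpos : ∀ x, 0 < φ x) (hint : Integrable φ) (htotal : ∫ x, φ x = 1)
    (hsym : ∀ t : ℝ, φ (ω + t) = φ (ω - t))
    (huni : ∀ x y : ℝ, |y - ω| ≤ |x - ω| → φ x ≤ φ y)
    (c θ : ℝ) (hcθ : c < θ)
    (m : ℝ) (hm : m ∈ Set.Icc (2 * c - θ) θ)
    (hmed : (∫ x in (2 * c - θ)..m, φ x) = ∫ x in m..θ, φ x) :
    (c ≤ ω → c ≤ m ∧ m ≤ ω) ∧ (ω ≤ c → ω ≤ m ∧ m ≤ c) ∧ (c = ω → m = ω) :=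
  truncated_median_between_estimate_and_truth_general φ ω hpos hint hsym huni c θ hcθ m hmed
end

section
/- Let φ : ℝ → (0,∞) be an everywhere-positive integrable probability density that is symmetric about ω and strictly unimodal about ω. Let c < ω and θ > c. Then the unique median m of the truncation of φ to [2c − θ, θ] satisfies m > c strictly; that is, ∫_c^θ φ(x) dx > ∫_{2c−θ}^c φ(x) dx. -/
/-!
Reflecting `[2c - θ, c]` onto `[c, θ]` through `c` sends each `x ∈ (c, θ)` to `2c - x`, which is
farther from the mode `ω > c` than `x`; so by strict unimodality the density is pointwise larger on
the right half, and the right half carries strictly more mass. A median `m ≤ c` would then give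
`∫_{2c-θ}^m φ ≤ ∫_{2c-θ}^c φ < ∫_c^θ φ ≤ ∫_m^θ φ`.
-/

open MeasureTheory intervalIntegral

lemma abs_sub_lt_abs_two_mul_sub_sub {c ω x : ℝ} (hcω : c < ω) (hcx : c < x) :
    |x - ω| < |2 * c - x - ω| := by
  rw [abs_of_neg (by linarith : 2 * c - x - ω < 0)]
  rcases abs_cases (x - ω) with ⟨h, _⟩ | ⟨h, _⟩ <;> rw [h] <;> linarith

lemma intervalIntegral_lt_of_reflect_lt {f : ℝ → ℝ} {c θ : ℝ} (hθ : c < θ)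
    (hleft : IntervalIntegrable f volume (2 * c - θ) c)
    (hright : IntervalIntegrable f volume c θ)
    (hlt : ∀ x ∈ Set.Ioo c θ, f (2 * c - x) < f x) :
    (∫ x in (2 * c - θ)..c, f x) < ∫ x in c..θ, f x := by
  have hreflect : (∫ x in c..θ, f (2 * c - x)) = ∫ x in (2 * c - θ)..c, f x := by
    rw [integral_comp_sub_left f (2 * c)]
    congr 1; ring
  have hreflect_int : IntervalIntegrable (fun x => f (2 * c - x)) volume c θ := by
    have h := hleft.symm.comp_sub_left (2 * c)
    rwa [show 2 * c - c = c by ring, sub_sub_cancel] at h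
  rw [← hreflect, ← sub_pos, ← integral_sub hright hreflect_int]
  exact intervalIntegral_pos_of_pos_on (hright.sub hreflect_int)
    (fun x hx => sub_pos.2 (hlt x hx)) hθ

lemma lt_of_intervalIntegral_eq_of_lt {f : ℝ → ℝ} {a b c m : ℝ}
    (hf : ∀ x y, IntervalIntegrable f volume x y) (hnonneg : ∀ x, 0 ≤ f x)
    (hlt : (∫ x in a..c, f x) < ∫ x in c..b, f x)
    (hmedian : (∫ x in a..m, f x) = ∫ x in m..b, f x) : c < m := by
  by_contra! hmc
  have hmid : 0 ≤ ∫ x in m..c, f x := integral_nonneg hmc fun x _ => hnonneg x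
  have hleft := integral_add_adjacent_intervals (hf a m) (hf m c)
  have hright := integral_add_adjacent_intervals (hf m c) (hf c b)
  linarith

theorem truncated_median_strictly_increases_general
    (φ : ℝ → ℝ) (ω : ℝ)
    (hpos : ∀ x, 0 < φ x) (hint : Integrable φ)
    (hsuni : ∀ x y : ℝ, |y - ω| < |x - ω| → φ x < φ y)
    (c θ : ℝ) (hcω : c < ω) (hθ : c < θ) :
    (∫ x in (2 * c - θ)..c, φ x) < (∫ x in c..θ, φ x) ∧
    ∀ m ∈ Set.Icc (2 * c - θ) θ,
      (∫ x in (2 * c - θ)..m, φ x) = (∫ x in m..θ, φ x) → c < m := by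
  have hφ : ∀ x y, IntervalIntegrable φ volume x y := fun _ _ => hint.intervalIntegrable
  have hmass : (∫ x in (2 * c - θ)..c, φ x) < ∫ x in c..θ, φ x :=
    intervalIntegral_lt_of_reflect_lt hθ (hφ _ _) (hφ _ _) fun x hx =>
      hsuni _ _ (abs_sub_lt_abs_two_mul_sub_sub hcω hx.1)
  exact ⟨hmass, fun m _ hmedian =>
    lt_of_intervalIntegral_eq_of_lt hφ (fun x => (hpos x).le) hmass hmedian⟩

/-- **strict progress of the median update.**
Let `φ` be an everywhere-positive integrable probability density, symmetric about `ω`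
and strictly unimodal about `ω`.  If `c < ω` and `θ > c`, then the mass of the
exploration interval `[2c − θ, θ]` to the right of its midpoint `c` strictly exceeds
the mass to the left, `∫_c^θ φ > ∫_{2c−θ}^c φ`; that is, the unique median `m` of the
truncation of `φ` to `[2c − θ, θ]` satisfies `m > c`. -/
theorem truncated_median_strictly_increases
    (φ : ℝ → ℝ) (ω : ℝ)
    (hpos : ∀ x, 0 < φ x) (hint : Integrable φ) (htotal : ∫ x, φ x = 1)
    (hsym : ∀ t : ℝ, φ (ω + t) = φ (ω - t))
    (hsuni : ∀ x y : ℝ, |y - ω| < |x - ω| → φ x < φ y)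
    (c θ : ℝ) (hcω : c < ω) (hθ : c < θ) :
    (∫ x in (2 * c - θ)..c, φ x) < (∫ x in c..θ, φ x) ∧
    ∀ m ∈ Set.Icc (2 * c - θ) θ,
      (∫ x in (2 * c - θ)..m, φ x) = (∫ x in m..θ, φ x) → c < m :=
  truncated_median_strictly_increases_general φ ω hpos hint hsuni c θ hcω hθ
end

section
/- Let φ : ℝ → (0,∞) be an everywhere-positive integrable probability density that is symmetric about ω and unimodal about ω. Let c ≤ ω and θ > c, and let Y₁, …, Y_{2m+1} be i.i.d. random variables distributed according to the truncation of φ to the interval [2c − θ, θ] (the probability measure with density proportional to φ · 1_{[2c−θ, θ]}). Let M be their sample median. Then P(M < c) ≤ 1/2; that is, with probability at least 1/2 the updated estimate M is at least the current estimate c. -/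
/-!
Reflection about `c` maps the part of `[2c - θ, θ]` left of `c` onto the part right of `c`, and
since `c ≤ ω` each point left of `c` is at least as far from `ω` as its mirror image. By unimodality
a truncated sample is therefore below `c` with probability `p` at most the probability `q` that it
is at or above `c`. The median of `2m + 1` samples is below `c` iff a majority of them is, and the
samples below `c` form a given set `S` with probability `p ^ #S * q ^ #Sᶜ`; for a majority `S` this
is at most `q ^ #S * p ^ #Sᶜ`, the probability that the samples at or above `c` form `S`. So a
majority below `c` is at most as likely as the disjoint event of a majority at or above `c`.
-/

open MeasureTheory ProbabilityTheory
open scoped ProbabilityTheory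

/-- The `k`-th smallest value (the `k`-th order statistic, `1 ≤ k ≤ n`) of the
values `y 0, …, y (n-1)`: the least `x` such that at least `k` of the values are `≤ x`. -/
noncomputable def orderStat {n : ℕ} (k : ℕ) (y : Fin n → ℝ) : ℝ :=
  sInf {x : ℝ | k ≤ Nat.card {i : Fin n // y i ≤ x}}

/-- The sample median of `2m+1` values is their `(m+1)`-st order statistic. -/
noncomputable def sampleMedian {m : ℕ} (y : Fin (2 * m + 1) → ℝ) : ℝ :=
  orderStat (m + 1) y

open scoped Finset ENNReal

theorem orderStat_lt_iff {n k : ℕ} (hk : 0 < k) (hkn : k ≤ n) (y : Fin n → ℝ) (c : ℝ) :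
    orderStat k y < c ↔ k ≤ #{i | y i < c} := by
  have card_eq (x : ℝ) : Nat.card {i : Fin n // y i ≤ x} = #{i | y i ≤ x} := by
    rw [Nat.card_eq_fintype_card, Fintype.card_subtype]
  set S := {x : ℝ | k ≤ Nat.card {i : Fin n // y i ≤ x}}
  constructor
  · intro h
    have hS : S.Nonempty := by
      obtain ⟨b, hb⟩ := (Set.finite_range y).bddAbove
      refine ⟨b, ?_⟩
      simpa [S, card_eq, Set.forall_mem_range.mp hb] using hkn
    obtain ⟨x, hxS, hxc⟩ := exists_lt_of_csInf_lt hS h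
    rw [Set.mem_ofPred_eq, card_eq] at hxS
    exact hxS.trans (Finset.card_le_card fun i => by simpa using fun h => h.trans_lt hxc)
  · intro h
    have hbdd : BddBelow S := by
      obtain ⟨b, hb⟩ := (Set.finite_range y).bddBelow
      refine ⟨b, fun x hx => ?_⟩
      rw [Set.mem_ofPred_eq, card_eq] at hx
      obtain ⟨i, hi⟩ := Finset.card_pos.mp (hk.trans_le hx)
      exact (Set.forall_mem_range.mp hb i).trans (Finset.mem_filter.mp hi).2
    obtain ⟨j, hj, hmax⟩ := Finset.exists_max_image _ y (Finset.card_pos.mp (hk.trans_le h))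
    refine csInf_lt_of_lt hbdd ?_ (Finset.mem_filter.mp hj).2
    rw [Set.mem_ofPred_eq, card_eq]
    exact h.trans (Finset.card_le_card fun i hi => by simpa using hmax i hi)

theorem sampleMedian_lt_iff {m : ℕ} (y : Fin (2 * m + 1) → ℝ) (c : ℝ) :
    sampleMedian y < c ↔ m + 1 ≤ #{i | y i < c} :=
  orderStat_lt_iff m.succ_pos (by omega) y c

theorem pow_mul_pow_le_pow_mul_pow {R : Type*} [CommSemiring R] [PartialOrder R]
    [IsOrderedRing R] {p q : R} (hp : 0 ≤ p) (hpq : p ≤ q) {j k : ℕ} (hjk : j ≤ k) :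
    p ^ k * q ^ j ≤ p ^ j * q ^ k := by
  obtain ⟨d, rfl⟩ := Nat.exists_eq_add_of_le hjk
  rw [pow_add, pow_add, mul_right_comm, ← mul_assoc]
  exact mul_le_mul_of_nonneg_left (pow_le_pow_left₀ hp hpq d)
    (mul_nonneg (pow_nonneg hp j) (pow_nonneg (hp.trans hpq) j))

theorem withDensity_preimage_two_mul_sub_le {f : ℝ → ℝ≥0∞} (c : ℝ) {s : Set ℝ}
    (hs : MeasurableSet s) (hf : ∀ x ∈ s, f (2 * c - x) ≤ f x) :
    volume.withDensity f ((fun x => 2 * c - x) ⁻¹' s) ≤ volume.withDensity f s := by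
  have hemb : MeasurableEmbedding fun x : ℝ => 2 * c - x :=
    (MeasurableEquiv.subLeft (2 * c)).measurableEmbedding
  rw [withDensity_apply _ (hemb.measurable hs), withDensity_apply _ hs]
  calc ∫⁻ x in (fun x => 2 * c - x) ⁻¹' s, f x
      = ∫⁻ x in (fun x => 2 * c - x) ⁻¹' s, f (2 * c - (2 * c - x)) := by simp_rw [sub_sub_cancel]
    _ = ∫⁻ x in s, f (2 * c - x) :=
      (Measure.measurePreserving_sub_left volume (2 * c)).setLIntegral_comp_preimage_emb hemb
        (fun y => f (2 * c - y)) s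
    _ ≤ ∫⁻ x in s, f x := setLIntegral_mono' hs hf

theorem cond_Iio_le_cond_Ici {φ : ℝ → ℝ} {ω c : ℝ}
    (huni : ∀ x y : ℝ, |y - ω| ≤ |x - ω| → φ x ≤ φ y) (hcω : c ≤ ω) (θ : ℝ) :
    (volume.withDensity fun x => ENNReal.ofReal (φ x))[|Set.Icc (2 * c - θ) θ] (Set.Iio c) ≤
      (volume.withDensity fun x => ENNReal.ofReal (φ x))[|Set.Icc (2 * c - θ) θ] (Set.Ici c) := by
  set ν := volume.withDensity fun x => ENNReal.ofReal (φ x)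
  rw [cond_apply measurableSet_Icc, cond_apply measurableSet_Icc]
  refine mul_le_mul_right ?_ _
  have hreflect : Set.Icc (2 * c - θ) θ ∩ Set.Iio c = (fun x => 2 * c - x) ⁻¹' Set.Ioc c θ := by
    ext x
    simp only [Set.mem_inter_iff, Set.mem_Icc, Set.mem_Iio, Set.mem_preimage, Set.mem_Ioc]
    constructor
    · rintro ⟨⟨h₁, h₂⟩, h₃⟩
      constructor <;> linarith
    · rintro ⟨h₁, h₂⟩
      refine ⟨⟨?_, ?_⟩, ?_⟩ <;> linarith
  calc ν (Set.Icc (2 * c - θ) θ ∩ Set.Iio c) ≤ ν (Set.Ioc c θ) := by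
        rw [hreflect]
        refine withDensity_preimage_two_mul_sub_le c measurableSet_Ioc fun x hx => ?_
        refine ENNReal.ofReal_le_ofReal (huni _ _ ?_)
        rw [abs_of_nonpos (a := 2 * c - x - ω) (by linarith [hx.1]), abs_le]
        constructor <;> linarith [hx.1]
    _ ≤ ν (Set.Icc (2 * c - θ) θ ∩ Set.Ici c) :=
        measure_mono fun x hx => ⟨⟨by linarith [hx.1, hx.2], hx.2⟩, hx.1.le⟩

section

variable {Ω ι β : Type*} [Fintype ι] {Y : ι → Ω → β} {A : Set β} [DecidablePred (· ∈ A)]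

theorem setOf_filter_mem_eq [DecidableEq ι] (S : Finset ι) :
    {a | ({i | Y i a ∈ A} : Finset ι) = S} = ⋂ i, Y i ⁻¹' (if i ∈ S then A else Aᶜ) := by
  ext a
  simp only [Set.mem_ofPred_eq, Finset.ext_iff, Finset.mem_filter_univ, Set.mem_iInter]
  refine forall_congr' fun i => ?_
  split_ifs with hi <;> simp [hi]

variable [MeasurableSpace Ω] [MeasurableSpace β] {P : Measure Ω} {μ : Measure β}

theorem measurable_card_filter_mem (hY : ∀ i, Measurable (Y i)) (hA : MeasurableSet A) :
    Measurable fun a => #{i | Y i a ∈ A} := by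
  simp_rw [Finset.card_filter]
  exact Finset.measurable_sum _ fun i _ => measurable_const.ite (hY i hA) measurable_const

variable [DecidableEq ι]

theorem measurableSet_setOf_filter_mem_eq (hY : ∀ i, Measurable (Y i)) (hA : MeasurableSet A)
    (S : Finset ι) : MeasurableSet {a | ({i | Y i a ∈ A} : Finset ι) = S} := by
  rw [setOf_filter_mem_eq]
  refine .iInter fun i => hY i ?_
  split_ifs
  exacts [hA, hA.compl]

theorem ProbabilityTheory.iIndepFun.measure_setOf_filter_mem_eq (hind : iIndepFun Y P)
    (hY : ∀ i, Measurable (Y i)) (hlaw : ∀ i, P.map (Y i) = μ) (hA : MeasurableSet A)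
    (S : Finset ι) : P {a | ({i | Y i a ∈ A} : Finset ι) = S} = μ A ^ #S * μ Aᶜ ^ #Sᶜ := by
  have hlaw' (i : ι) (B : Set β) (hB : MeasurableSet B) : P (Y i ⁻¹' B) = μ B := by
    rw [← hlaw i, Measure.map_apply (hY i) hB]
  rw [setOf_filter_mem_eq, hind.meas_iInter fun i => ⟨_, ?_, rfl⟩]
  · simp only [apply_ite, hlaw' _ _ hA, hlaw' _ _ hA.compl]
    rw [Finset.prod_ite, Finset.prod_const, Finset.prod_const, Finset.filter_mem_eq_inter,
      Finset.univ_inter, Finset.filter_notMem_eq_sdiff, ← Finset.compl_eq_univ_sdiff]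
  · split_ifs
    exacts [hA, hA.compl]

theorem ProbabilityTheory.iIndepFun.measure_majority_eq_sum (hind : iIndepFun Y P)
    (hY : ∀ i, Measurable (Y i)) (hlaw : ∀ i, P.map (Y i) = μ) (hA : MeasurableSet A) :
    P {a | Fintype.card ι < 2 * #{i | Y i a ∈ A}} =
      ∑ S : Finset ι with Fintype.card ι < 2 * #S, μ A ^ #S * μ Aᶜ ^ #Sᶜ := by
  let pattern (a : Ω) : Finset ι := {i | Y i a ∈ A}
  have hpre : {a | Fintype.card ι < 2 * #{i | Y i a ∈ A}} =
      pattern ⁻¹' ↑({S | Fintype.card ι < 2 * #S} : Finset (Finset ι)) := by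
    ext a; simp [pattern]
  rw [hpre, ← sum_measure_preimage_singleton _
    fun S _ => measurableSet_setOf_filter_mem_eq hY hA S]
  exact Finset.sum_congr rfl fun S _ => hind.measure_setOf_filter_mem_eq hY hlaw hA S

theorem ProbabilityTheory.iIndepFun.measure_majority_le_half [IsProbabilityMeasure P] (hind : iIndepFun Y P)
    (hY : ∀ i, Measurable (Y i)) (hlaw : ∀ i, P.map (Y i) = μ) (hA : MeasurableSet A)
    (hle : μ A ≤ μ Aᶜ) : P {a | Fintype.card ι < 2 * #{i | Y i a ∈ A}} ≤ 1 / 2 := by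
  set E := {a | Fintype.card ι < 2 * #{i | Y i a ∈ A}}
  set Ec := {a | Fintype.card ι < 2 * #{i | Y i a ∈ Aᶜ}}
  have hcompare : P E ≤ P Ec := by
    rw [hind.measure_majority_eq_sum hY hlaw hA, hind.measure_majority_eq_sum hY hlaw hA.compl,
      compl_compl]
    refine Finset.sum_le_sum fun S hS =>
      (pow_mul_pow_le_pow_mul_pow zero_le hle ?_).trans_eq (mul_comm _ _)
    have := Finset.card_add_card_compl S
    simp only [Finset.mem_filter_univ] at hS
    omega
  have hdisj : Disjoint E Ec := by
    refine Set.disjoint_left.mpr fun a ha hac => ?_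
    have := Finset.card_filter_add_card_filter_not (s := Finset.univ) (fun i => Y i a ∈ A)
    simp only [E, Ec, Set.mem_ofPred_eq, Set.mem_compl_iff] at ha hac
    rw [Finset.card_univ] at this
    omega
  have hEc : MeasurableSet Ec :=
    measurableSet_lt measurable_const ((measurable_card_filter_mem hY hA.compl).const_mul 2)
  rw [ENNReal.le_div_iff_mul_le (by simp) (by simp), mul_two]
  calc P E + P E ≤ P E + P Ec := by gcongr
    _ = P (E ∪ Ec) := (measure_union hdisj hEc).symm
    _ ≤ 1 := prob_le_one

end

theorem sampleMedian_below_estimate_le_half_general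
    {Ω : Type*} [MeasureSpace Ω] [IsProbabilityMeasure (ℙ : Measure Ω)]
    (φ : ℝ → ℝ) (ω : ℝ)
    (huni : ∀ x y : ℝ, |y - ω| ≤ |x - ω| → φ x ≤ φ y)
    (c θ : ℝ) (hcω : c ≤ ω)
    (m : ℕ) (Y : Fin (2 * m + 1) → Ω → ℝ)
    (hYm : ∀ i, Measurable (Y i))
    (hindep : iIndepFun Y)
    (hident : ∀ i, Measure.map (Y i) ℙ =
      (volume.withDensity fun x => ENNReal.ofReal (φ x))[|Set.Icc (2 * c - θ) θ]) :
    ℙ {a | sampleMedian (fun i => Y i a) < c} ≤ 1 / 2 := by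
  have hmajority : {a | sampleMedian (fun i => Y i a) < c} =
      {a | Fintype.card (Fin (2 * m + 1)) < 2 * #{i | Y i a ∈ Set.Iio c}} := by
    ext a
    simp only [Set.mem_ofPred_eq, sampleMedian_lt_iff, Set.mem_Iio, Fintype.card_fin]
    omega
  rw [hmajority]
  have hle := cond_Iio_le_cond_Ici huni hcω θ
  rw [← Set.compl_Iio] at hle
  exact hindep.measure_majority_le_half (A := Set.Iio c) hYm hident measurableSet_Iio hle

/-- **finite-sample form of Theorem 3(a) of the paper.**
Let `φ` be an everywhere-positive integrable probability density, symmetric about `ω`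
and unimodal about `ω`.  Let `c ≤ ω`, `θ > c`, and let `Y 0, …, Y 2m` be i.i.d. with law
the truncation of `φ` to the exploration interval `[2c − θ, θ]` (the conditional measure
of the density measure on that interval).  Then the sample median `M` of the `Y i`
satisfies `P(M < c) ≤ 1/2`, i.e. the updated estimate is at least `c` with probability
at least `1/2`. -/
theorem sampleMedian_below_estimate_le_half
    {Ω : Type*} [MeasureSpace Ω] [IsProbabilityMeasure (ℙ : Measure Ω)]
    (φ : ℝ → ℝ) (ω : ℝ)
    (hpos : ∀ x, 0 < φ x) (hint : Integrable φ) (htotal : ∫ x, φ x = 1)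
    (hsym : ∀ t : ℝ, φ (ω + t) = φ (ω - t))
    (huni : ∀ x y : ℝ, |y - ω| ≤ |x - ω| → φ x ≤ φ y)
    (c θ : ℝ) (hcω : c ≤ ω) (hθ : c < θ)
    (m : ℕ) (Y : Fin (2 * m + 1) → Ω → ℝ)
    (hYm : ∀ i, Measurable (Y i))
    (hindep : iIndepFun Y)
    (hident : ∀ i, Measure.map (Y i) ℙ =
      (volume.withDensity fun x => ENNReal.ofReal (φ x))[|Set.Icc (2 * c - θ) θ]) :
    ℙ {a | sampleMedian (fun i => Y i a) < c} ≤ 1 / 2 :=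
  sampleMedian_below_estimate_le_half_general φ ω huni c θ hcω m Y hYm hindep hident
end

section
/- Let φ : ℝ → (0,∞) be a continuous, everywhere-positive, integrable probability density that is symmetric about ω and strictly unimodal about ω. Fix δ > 0 and Θ ≥ ω + δ. Let ω̂₀ ≤ ω, let (θ_t)_{t≥0} be any sequence with θ_t ∈ [ω + δ, Θ] for all t, and define recursively ω̂_{t+1} to be the unique median of the truncation of φ to the interval [2ω̂_t − θ_t, θ_t]. Then the sequence (ω̂_t) is nondecreasing, satisfies ω̂_t ≤ ω for all t, and converges to ω as t → ∞. -/
/-!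
For `w ≤ ω`, reflecting about `w` sends each `x ≥ w` to `2w - x`, which is farther from the mode,
so `φ` has at least as much mass on `[w, b]` as on `[2w - b, w]` and the median of `[2w - b, b]`
lies to the right of `w`; by symmetry about `ω` it does not pass `ω`. Twice the mass between `w`
and the new median is `∫_w^b (φ x - φ (2w - x))`. While the estimates stay below some `L < ω`
this is at least `∫_ω^{ω+δ} (φ x - φ (2L - x)) > 0`, and the mass is at most `φ ω` times the
step length, so the steps are bounded below, which is impossible for a convergent sequence.
-/

open MeasureTheory intervalIntegral Filter Topology

lemma tendsto_of_monotone_of_step_ge {u : ℕ → ℝ} {ω : ℝ} (hmono : Monotone u)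
    (hle : ∀ t, u t ≤ ω)
    (hstep : ∀ L < ω, ∃ κ > 0, ∀ t, u t ≤ L → κ ≤ u (t + 1) - u t) :
    Tendsto u atTop (𝓝 ω) := by
  have hbdd : BddAbove (Set.range u) := ⟨ω, Set.forall_mem_range.2 hle⟩
  have hlim := tendsto_atTop_ciSup hmono hbdd
  obtain hsup | hsup := (ciSup_le hle).lt_or_eq
  · obtain ⟨κ, hκ, hκstep⟩ := hstep _ hsup
    have hinc : Tendsto (fun t => u (t + 1) - u t) atTop (𝓝 0) := by
      simpa using (hlim.comp (tendsto_add_atTop_nat 1)).sub hlim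
    obtain ⟨t, ht⟩ := (hinc.eventually (gt_mem_nhds hκ)).exists
    exact absurd (hκstep t (le_ciSup hbdd t)) (not_le.2 ht)
  · rwa [hsup] at hlim

section SymmetricUnimodal

variable {φ : ℝ → ℝ} {ω : ℝ}

lemma apply_le_apply_of_abs_sub_le (hsym : ∀ t, φ (ω + t) = φ (ω - t))
    (hsuni : ∀ x y, |y - ω| < |x - ω| → φ x < φ y) {x y : ℝ} (h : |y - ω| ≤ |x - ω|) :
    φ x ≤ φ y := by
  obtain h | h := h.lt_or_eq
  · exact (hsuni x y h).le
  obtain h | h := abs_eq_abs.mp h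
  · rw [sub_left_inj.1 h]
  · rw [show x = ω - (y - ω) by linarith, ← hsym, add_sub_cancel]

lemma integral_le_integral_of_symm (hφ : Continuous φ) (hnn : ∀ x, 0 ≤ φ x)
    (hsym : ∀ t, φ (ω + t) = φ (ω - t)) {a b : ℝ} (hb : ω ≤ b) (hab : b - ω ≤ ω - a) :
    ∫ x in ω..b, φ x ≤ ∫ x in a..ω, φ x :=
  calc ∫ x in ω..b, φ x ≤ ∫ x in ω..(2 * ω - a), φ x :=
        integral_mono_interval le_rfl hb (by linarith) (.of_forall hnn)
          (hφ.intervalIntegrable ω _)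
    _ = ∫ x in ω..(2 * ω - a), φ (2 * ω - x) := by
        congr 1; ext x
        rw [show 2 * ω - x = ω - (x - ω) by ring, ← hsym]; congr 1; ring
    _ = ∫ x in a..ω, φ x := by rw [integral_comp_sub_left]; congr 1 <;> ring

lemma le_of_integral_nonneg_s13 (hφ : Continuous φ) (hpos : ∀ x, 0 < φ x) {a b : ℝ}
    (h : 0 ≤ ∫ x in a..b, φ x) : a ≤ b := by
  by_contra! hba
  have := intervalIntegral_pos_of_pos_on (hφ.intervalIntegrable b a) (fun x _ => hpos x)
    hba
  rw [integral_symm b a] at h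
  linarith

end SymmetricUnimodal

/-- The integrals are oriented: for positive `φ` the equation forces `m ∈ [a, b]`. -/
def IsIntervalMedian (φ : ℝ → ℝ) (a b m : ℝ) : Prop :=
  ∫ x in a..m, φ x = ∫ x in m..b, φ x

namespace IsIntervalMedian

variable {φ : ℝ → ℝ} {ω a b m w : ℝ}

lemma two_mul_integral_eq (hm : IsIntervalMedian φ a b m) (hφ : Continuous φ) (c : ℝ) :
    2 * ∫ x in c..m, φ x = (∫ x in c..b, φ x) - ∫ x in a..c, φ x := by
  have hac := integral_add_adjacent_intervals (hφ.intervalIntegrable (μ := volume) a c)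
    (hφ.intervalIntegrable c m)
  have hcb := integral_add_adjacent_intervals (hφ.intervalIntegrable (μ := volume) c m)
    (hφ.intervalIntegrable m b)
  unfold IsIntervalMedian at hm
  linarith

lemma median_le (hm : IsIntervalMedian φ (2 * w - b) b m) (hφ : Continuous φ)
    (hpos : ∀ x, 0 < φ x) (hsym : ∀ t, φ (ω + t) = φ (ω - t)) (hw : w ≤ ω)
    (hb : ω ≤ b) : m ≤ ω := by
  refine le_of_integral_nonneg_s13 hφ hpos ?_
  have hmass := integral_le_integral_of_symm hφ (fun x => (hpos x).le) hsym hb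
    (by linarith : b - ω ≤ ω - (2 * w - b))
  have := hm.two_mul_integral_eq hφ ω
  rw [integral_symm]
  linarith

lemma integral_sub_reflect_le (hm : IsIntervalMedian φ (2 * w - b) b m) (hφ : Continuous φ)
    (hsym : ∀ t, φ (ω + t) = φ (ω - t)) (hsuni : ∀ x y, |y - ω| < |x - ω| → φ x < φ y)
    (hw : w ≤ ω) {c : ℝ} (hc : ω ≤ c) (hcb : c ≤ b) :
    ∫ x in ω..c, (φ x - φ (2 * w - x)) ≤ 2 * ∫ x in w..m, φ x := by
  have hreflect : ∀ x, w ≤ x → φ (2 * w - x) ≤ φ x := fun x hx => by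
    refine apply_le_apply_of_abs_sub_le hsym hsuni ?_
    rw [abs_of_nonpos (by linarith : 2 * w - x - ω ≤ 0)]
    exact abs_le.2 ⟨by linarith, by linarith⟩
  have hg : Continuous fun x => φ x - φ (2 * w - x) := by fun_prop
  calc ∫ x in ω..c, (φ x - φ (2 * w - x)) ≤ ∫ x in w..b, (φ x - φ (2 * w - x)) :=
        integral_mono_interval hw hc hcb
          ((ae_restrict_mem measurableSet_Ioc).mono fun x hx =>
            sub_nonneg.2 (hreflect x hx.1.le))
          (hg.intervalIntegrable _ _)
    _ = (∫ x in w..b, φ x) - ∫ x in (2 * w - b)..w, φ x := by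
        have hr : Continuous fun x => φ (2 * w - x) := by fun_prop
        rw [intervalIntegral.integral_sub (hφ.intervalIntegrable _ _)
          (hr.intervalIntegrable _ _), integral_comp_sub_left, show 2 * w - w = w by ring]
    _ = 2 * ∫ x in w..m, φ x := (hm.two_mul_integral_eq hφ w).symm

lemma le_median (hm : IsIntervalMedian φ (2 * w - b) b m) (hφ : Continuous φ)
    (hpos : ∀ x, 0 < φ x) (hsym : ∀ t, φ (ω + t) = φ (ω - t))
    (hsuni : ∀ x y, |y - ω| < |x - ω| → φ x < φ y) (hw : w ≤ ω) (hb : ω ≤ b) : w ≤ m := by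
  refine le_of_integral_nonneg_s13 hφ hpos ?_
  have := hm.integral_sub_reflect_le hφ hsym hsuni hw le_rfl hb
  rw [integral_same] at this
  linarith

end IsIntervalMedian

lemma exists_pos_le_median_sub {φ : ℝ → ℝ} {ω L δ : ℝ} (hφ : Continuous φ)
    (hpos : ∀ x, 0 < φ x) (hsym : ∀ t, φ (ω + t) = φ (ω - t))
    (hsuni : ∀ x y, |y - ω| < |x - ω| → φ x < φ y) (hL : L < ω) (hδ : 0 < δ) :
    ∃ κ > 0, ∀ {w b m : ℝ}, IsIntervalMedian φ (2 * w - b) b m → w ≤ L → ω + δ ≤ b →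
      κ ≤ m - w := by
  set c := ∫ x in ω..(ω + δ), (φ x - φ (2 * L - x))
  have hg : Continuous fun x => φ x - φ (2 * L - x) := by fun_prop
  have hc : 0 < c := by
    refine intervalIntegral_pos_of_pos_on (hg.intervalIntegrable _ _)
      (fun x hx => sub_pos.2 (hsuni _ _ ?_)) (by linarith)
    rw [abs_of_pos (sub_pos.2 hx.1), abs_of_neg (by linarith [hx.1] : 2 * L - x - ω < 0)]
    linarith
  have hφω := hpos ω
  refine ⟨c / (2 * φ ω), by positivity, fun {w b m} hm hwL hb => ?_⟩
  have hw : w ≤ ω := hwL.trans hL.le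
  have hwm := hm.le_median hφ hpos hsym hsuni hw (by linarith)
  have hcw : c ≤ ∫ x in ω..(ω + δ), (φ x - φ (2 * w - x)) := by
    have hgw : Continuous fun x => φ x - φ (2 * w - x) := by fun_prop
    refine integral_mono_on (by linarith) (hg.intervalIntegrable _ _)
      (hgw.intervalIntegrable _ _) fun x hx => ?_
    refine sub_le_sub_left (apply_le_apply_of_abs_sub_le hsym hsuni ?_) _
    rw [abs_of_nonpos (by linarith [hx.1]), abs_of_nonpos (by linarith [hx.1])]
    linarith
  have hgap := hm.integral_sub_reflect_le hφ hsym hsuni hw (by linarith) hb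
  have hcenter : ∫ x in w..m, φ x ≤ (m - w) * φ ω := by
    have hmode : ∀ x, φ x ≤ φ ω := fun x =>
      apply_le_apply_of_abs_sub_le hsym hsuni (by rw [sub_self, abs_zero]; exact abs_nonneg _)
    simpa using integral_mono_on hwm (hφ.intervalIntegrable (μ := volume) _ _)
      intervalIntegrable_const fun x _ => hmode x
  rw [div_le_iff₀ (by positivity)]
  linarith

theorem active_debiasing_population_converges_general
    (φ : ℝ → ℝ) (ω : ℝ)
    (hcont : Continuous φ) (hpos : ∀ x, 0 < φ x)
    (hsym : ∀ t : ℝ, φ (ω + t) = φ (ω - t))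
    (hsuni : ∀ x y : ℝ, |y - ω| < |x - ω| → φ x < φ y)
    (δ Θ : ℝ) (hδ : 0 < δ)
    (ωh θ : ℕ → ℝ)
    (hθ : ∀ t, θ t ∈ Set.Icc (ω + δ) Θ)
    (h0 : ωh 0 ≤ ω)
    (hrec : ∀ t,
      (∫ x in (2 * ωh t - θ t)..(ωh (t + 1)), φ x) = ∫ x in (ωh (t + 1))..(θ t), φ x) :
    Monotone ωh ∧ (∀ t, ωh t ≤ ω) ∧ Tendsto ωh atTop (nhds ω) := by
  have hmed : ∀ t, IsIntervalMedian φ (2 * ωh t - θ t) (θ t) (ωh (t + 1)) := hrec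
  have hθω : ∀ t, ω ≤ θ t := fun t => by linarith [(hθ t).1]
  have hle : ∀ t, ωh t ≤ ω := by
    intro t
    induction t with
    | zero => exact h0
    | succ t ih => exact (hmed t).median_le hcont hpos hsym ih (hθω t)
  have hmono : Monotone ωh := monotone_nat_of_le_succ fun t =>
    (hmed t).le_median hcont hpos hsym hsuni (hle t) (hθω t)
  refine ⟨hmono, hle, tendsto_of_monotone_of_step_ge hmono hle fun L hL => ?_⟩
  obtain ⟨κ, hκ, hstep⟩ := exists_pos_le_median_sub hcont hpos hsym hsuni hL hδ
  exact ⟨κ, hκ, fun t ht => hstep (hmed t) ht (hθ t).1⟩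

/-- **population analogue of Theorem 3(b) of the paper.**
Let `φ` be a continuous, everywhere-positive, integrable probability density,
symmetric about `ω` and strictly unimodal about `ω`.  Fix `δ > 0` and `Θ ≥ ω + δ`.
Starting at `ω̂ 0 ≤ ω`, suppose each threshold satisfies `θ t ∈ [ω + δ, Θ]` and each
update `ω̂ (t+1)` is the (unique) median of the truncation of `φ` to the exploration
interval `[2 ω̂ t − θ t, θ t]`.  Then `(ω̂ t)` is nondecreasing, stays `≤ ω`, and
converges to the true parameter `ω`. -/
theorem active_debiasing_population_converges
    (φ : ℝ → ℝ) (ω : ℝ)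
    (hcont : Continuous φ) (hpos : ∀ x, 0 < φ x)
    (hint : Integrable φ) (htotal : ∫ x, φ x = 1)
    (hsym : ∀ t : ℝ, φ (ω + t) = φ (ω - t))
    (hsuni : ∀ x y : ℝ, |y - ω| < |x - ω| → φ x < φ y)
    (δ Θ : ℝ) (hδ : 0 < δ) (hΘ : ω + δ ≤ Θ)
    (ωh θ : ℕ → ℝ)
    (hθ : ∀ t, θ t ∈ Set.Icc (ω + δ) Θ)
    (h0 : ωh 0 ≤ ω)
    (hrec_mem : ∀ t, ωh (t + 1) ∈ Set.Icc (2 * ωh t - θ t) (θ t))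
    (hrec : ∀ t,
      (∫ x in (2 * ωh t - θ t)..(ωh (t + 1)), φ x) = ∫ x in (ωh (t + 1))..(θ t), φ x) :
    Monotone ωh ∧ (∀ t, ωh t ≤ ω) ∧ Tendsto ωh atTop (nhds ω) :=
  active_debiasing_population_converges_general φ ω hcont hpos hsym hsuni δ Θ hδ ωh θ hθ h0 hrec
end

section
/- Let F̂ : ℝ → (0,1) be a continuous, strictly increasing CDF that is surjective onto (0,1), and fix a reference point ω̂ ∈ ℝ. For θ > ω̂ with 2F̂(ω̂) − F̂(θ) > 0, define the exploration lower bound LB(θ) := F̂⁻¹(2F̂(ω̂) − F̂(θ)). Then for any two admissible thresholds with ω̂ < θ^F < θ^U: (i) LB(θ^F) > LB(θ^U), so the exploration interval is strictly nested, [LB(θ^F), θ^F] ⊊ [LB(θ^U), θ^U]; (ii) for every CDF F : ℝ → [0,1] (in particular the true feature distribution), F(θ^F) − F(LB(θ^F)) ≤ F(θ^U) − F(LB(θ^U)); and (iii) under F̂ itself the exploration mass satisfies F̂(θ) − F̂(LB(θ)) = 2(F̂(θ) − F̂(ω̂)), which is strictly increasing in θ. -/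
/-!
Since `F LB = 2 F ω̂ − F θ`, the point `F ω̂` is the midpoint of `F LB` and `F θ`. Hence
`F θ − F LB = 2 (F θ − F ω̂)`, and raising `θ` lowers `F LB`, i.e. (by strict monotonicity)
lowers `LB`. So a smaller threshold gives a strictly nested exploration interval, whose mass
under any monotone `G` can only be smaller.
-/

theorem apply_sub_apply_eq_two_mul_of_apply_eq_two_mul_sub {α : Type*} {F : α → ℝ} {ω θ lb : α}
    (hlb : F lb = 2 * F ω - F θ) : F θ - F lb = 2 * (F θ - F ω) := by
  rw [hlb]; ring

section ExplorationLowerBound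

variable {α : Type*} [LinearOrder α] {F : α → ℝ} {ω θ θ' lb lb' : α}

theorem StrictMono.lt_of_apply_eq_two_mul_sub (hF : StrictMono F) (hωθ : ω < θ)
    (hlb : F lb = 2 * F ω - F θ) : lb < ω :=
  hF.lt_iff_lt.mp (by linarith [hF hωθ])

theorem StrictMono.lt_of_apply_eq_two_mul_sub_of_lt (hF : StrictMono F) (hθ : θ < θ')
    (hlb : F lb = 2 * F ω - F θ) (hlb' : F lb' = 2 * F ω - F θ') : lb' < lb :=
  hF.lt_iff_lt.mp (by linarith [hF hθ])

end ExplorationLowerBound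

theorem fairness_overselection_shrinks_exploration_general
    (F : ℝ → ℝ) (hmono : StrictMono F)
    (ωh θF θU LBF LBU : ℝ)
    (hθF : ωh < θF) (hθFU : θF < θU)
    (hLBF : F LBF = 2 * F ωh - F θF)
    (hLBU : F LBU = 2 * F ωh - F θU) :
    (LBU < LBF ∧ Set.Icc LBF θF ⊂ Set.Icc LBU θU) ∧
    (∀ G : ℝ → ℝ, Monotone G → (∀ x, G x ∈ Set.Icc (0 : ℝ) 1) →
      G θF - G LBF ≤ G θU - G LBU) ∧
    (F θF - F LBF = 2 * (F θF - F ωh) ∧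
      F θU - F LBU = 2 * (F θU - F ωh) ∧
      F θF - F LBF < F θU - F LBU) := by
  have hLB : LBU < LBF := hmono.lt_of_apply_eq_two_mul_sub_of_lt hθFU hLBF hLBU
  have hLBFω : LBF < ωh := hmono.lt_of_apply_eq_two_mul_sub hθF hLBF
  have hmassF := apply_sub_apply_eq_two_mul_of_apply_eq_two_mul_sub hLBF
  have hmassU := apply_sub_apply_eq_two_mul_of_apply_eq_two_mul_sub hLBU
  refine ⟨⟨hLB, Set.Icc_ssubset_Icc_left ?_ hLB hθFU.le⟩, ?_, hmassF, hmassU, ?_⟩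
  · linarith
  · exact fun G hG _ => sub_le_sub (hG hθFU.le) (hG hLB.le)
  · rw [hmassF, hmassU]
    linarith [hmono hθFU]

/-- **Proposition 1 of the paper: fairness constraints and exploration.**
Let `F` be a continuous, strictly increasing CDF taking values in `(0,1)` and surjective
onto `(0,1)`, with reference point `ω̂`.  For admissible thresholds `ω̂ < θF < θU`
(admissibility: `2 F ω̂ − F θU > 0`), let `LBF` and `LBU` be the exploration lower bounds
of Definition 1, i.e. `F LBF = 2 F ω̂ − F θF` and `F LBU = 2 F ω̂ − F θU`.  Then:
(i) `LBF > LBU` and the exploration intervals are strictly nested,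
`[LBF, θF] ⊊ [LBU, θU]`;
(ii) for every CDF `G` (monotone with values in `[0,1]`), the exploration mass satisfies
`G θF − G LBF ≤ G θU − G LBU`;
(iii) under `F` itself, `F θ − F (LB θ) = 2 (F θ − F ω̂)`, strictly increasing in `θ`. -/
theorem fairness_overselection_shrinks_exploration
    (F : ℝ → ℝ) (hmono : StrictMono F) (hcont : Continuous F)
    (hrange : ∀ x, F x ∈ Set.Ioo (0 : ℝ) 1)
    (hsurj : ∀ y ∈ Set.Ioo (0 : ℝ) 1, ∃ x, F x = y)
    (ωh θF θU LBF LBU : ℝ)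
    (hθF : ωh < θF) (hθFU : θF < θU)
    (hadm : 0 < 2 * F ωh - F θU)
    (hLBF : F LBF = 2 * F ωh - F θF)
    (hLBU : F LBU = 2 * F ωh - F θU) :
    (LBU < LBF ∧ Set.Icc LBF θF ⊂ Set.Icc LBU θU) ∧
    (∀ G : ℝ → ℝ, Monotone G → (∀ x, G x ∈ Set.Icc (0 : ℝ) 1) →
      G θF - G LBF ≤ G θU - G LBU) ∧
    (F θF - F LBF = 2 * (F θF - F ωh) ∧
      F θU - F LBU = 2 * (F θU - F ωh) ∧
      F θF - F LBF < F θU - F LBU) :=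
  fairness_overselection_shrinks_exploration_general F hmono ωh θF θU LBF LBU hθF hθFU hLBF hLBU
end
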